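/- Under the hypotheses of Lemma 1 (1-flip local optimality) and with x_{j₁} = 1, x_{j₂} = 0, if the simultaneous flip strictly improves, i.e., Δz̃_{j₁,j₂}(x) < 0, then the set S̄(x) = {i ∈ S_{j₁} ∩ S_{j₂} : s_i(x) = b_i} is nonempty and the total penalty weight over S̄(x), namely Σ_{i ∈ S̄(x)∩(M_L∪M_E)} w̃_i⁺ + Σ_{i ∈ S̄(x)∩(M_G∪M_E)} w̃_i⁻, is strictly positive. -/

import Mathlib

open scoped Classical BigOperators

noncomputable def sLHS {M N : Type*} [Fintype N] (a : M → N → ℝ) (x : N → ℝ) (i : M) : ℝ :=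
  ∑ j, a i j * x j

noncomputable def penObj {M N : Type*} [Fintype M] [Fintype N]
    (ML MG ME : Finset M) (a : M → N → ℝ) (b : M → ℕ) (c : N → ℝ)
    (wp wm : M → ℝ) (x : N → ℝ) : ℝ :=
  (∑ j, c j * x j)
    + ∑ i ∈ ML ∪ ME, wp i * max (sLHS a x i - (b i : ℝ)) 0
    + ∑ i ∈ MG ∪ ME, wm i * max ((b i : ℝ) - sLHS a x i) 0

noncomputable def flipVar {N : Type*} [DecidableEq N] (x : N → ℝ) (j : N) : N → ℝ :=
  Function.update x j (1 - x j)

noncomputable def Sset {M N : Type*} [Fintype M] (a : M → N → ℝ) (j : N) : Finset M :=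
  Finset.univ.filter (fun i => a i j = 1)

/-!
Flipping `x_{j₁}` down and `x_{j₂}` up changes each row sum `s_i` by `-a_{ij₁} + a_{ij₂}`, so the
double flip differs from the sum of the two single flips only through the rows `i ∈ S_{j₁} ∩ S_{j₂}`,
and there by the mixed second difference of the hinge `t ↦ max t 0` at the integer `s_i(x) - b_i`.
That difference is `-1` at `0` and `0` elsewhere, whence
`Δz̃_{j₁,j₂} = Δz̃_{j₁} + Δz̃_{j₂} - W`, with `W` the penalty weight over `S̄(x)`.
By 1-flip optimality, `Δz̃_{j₁,j₂} < 0` forces `W > 0`, and then `S̄(x)` cannot be empty.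
-/

open Finset

lemma sum_mul_flipVar {N : Type*} [Fintype N] [DecidableEq N] (w x : N → ℝ) (j : N) :
    ∑ k, w k * flipVar x j k = ∑ k, w k * x k + w j * (1 - 2 * x j) := by
  calc ∑ k, w k * flipVar x j k
      = ∑ k, (w k * x k + if k = j then w j * (1 - 2 * x j) else 0) :=
        sum_congr rfl fun k _ => by
          by_cases h : k = j
          · subst h; simp only [flipVar, Function.update_self, if_true]; ring
          · simp [flipVar, h]
    _ = _ := by rw [sum_add_distrib, sum_ite_eq']; simp

lemma flipVar_of_ne {N : Type*} [DecidableEq N] (x : N → ℝ) {j k : N} (h : k ≠ j) :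
    flipVar x j k = x k :=
  Function.update_of_ne h _ _

lemma exists_intCast_sLHS {M N : Type*} [Fintype N] (a : M → N → ℝ) {x : N → ℝ} (i : M)
    (ha : ∀ j, ∃ k : ℤ, a i j = k) (hx : ∀ j, ∃ k : ℤ, x j = k) :
    ∃ n : ℤ, sLHS a x i = n := by
  choose α hα using ha
  choose ξ hξ using hx
  exact ⟨∑ j, α j * ξ j, by simp [sLHS, hα, hξ]⟩

section RowSums

variable {M N : Type*} [Fintype N] [DecidableEq N] (a : M → N → ℝ) {x : N → ℝ} {j : N}

lemma sLHS_flipVar_of_eq_one (h : x j = 1) (i : M) :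
    sLHS a (flipVar x j) i = sLHS a x i - a i j := by
  rw [sLHS, sum_mul_flipVar, h, ← sLHS]; ring

lemma sLHS_flipVar_of_eq_zero (h : x j = 0) (i : M) :
    sLHS a (flipVar x j) i = sLHS a x i + a i j := by
  rw [sLHS, sum_mul_flipVar, h, ← sLHS]; ring

lemma sLHS_flipVar_flipVar {j₁ j₂ : N} (hne : j₁ ≠ j₂) (h1 : x j₁ = 1) (h2 : x j₂ = 0)
    (i : M) : sLHS a (flipVar (flipVar x j₁) j₂) i = sLHS a x i - a i j₁ + a i j₂ := by
  rw [sLHS_flipVar_of_eq_zero a (by rwa [flipVar_of_ne x hne.symm]),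
    sLHS_flipVar_of_eq_one a h1]

end RowSums

lemma max_zero_mixed_diff {t p q : ℝ} (ht : ∃ n : ℤ, t = n) (hp : p = 0 ∨ p = 1)
    (hq : q = 0 ∨ q = 1) :
    max (t - p + q) 0 + max t 0 - max (t - p) 0 - max (t + q) 0
      = if p = 1 ∧ q = 1 ∧ t = 0 then -1 else 0 := by
  obtain ⟨n, rfl⟩ := ht
  rcases hp with rfl | rfl <;> rcases hq with rfl | rfl <;> norm_num
  rcases lt_trichotomy n 0 with hn | rfl | hn
  · have : (n : ℝ) ≤ -1 := by exact_mod_cast Int.le_sub_one_of_lt hn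
    rw [if_neg hn.ne, max_eq_right (by linarith), max_eq_right (by linarith),
      max_eq_right (by linarith)]
    ring
  · norm_num
  · have : (1 : ℝ) ≤ n := by exact_mod_cast hn
    rw [if_neg hn.ne', max_eq_left (by linarith), max_eq_left (by linarith),
      max_eq_left (by linarith)]
    ring

lemma sum_mul_mixed_diff {M : Type*} (T F : Finset M) (w f₁₂ f f₁ f₂ : M → ℝ)
    (h : ∀ i, f₁₂ i + f i - f₁ i - f₂ i = if i ∈ F then -1 else 0) :
    ∑ i ∈ T, w i * f₁₂ i + ∑ i ∈ T, w i * f i - ∑ i ∈ T, w i * f₁ i - ∑ i ∈ T, w i * f₂ i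
      = -∑ i ∈ F ∩ T, w i := by
  have hw : ∀ i, w i * f₁₂ i + w i * f i - w i * f₁ i - w i * f₂ i
      = if i ∈ F then -w i else 0 := fun i => by
    rw [← mul_add, ← mul_sub, ← mul_sub, h]; split_ifs <;> ring
  rw [← sum_add_distrib, ← sum_sub_distrib, ← sum_sub_distrib, sum_congr rfl fun i _ => hw i,
    sum_ite_mem, inter_comm, sum_neg_distrib]

lemma penObj_exchange_eq {M N : Type*} [Fintype M] [Fintype N] [DecidableEq N]
    (ML MG ME : Finset M) (a : M → N → ℝ) (b : M → ℕ) (c : N → ℝ) (wp wm : M → ℝ)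
    (ha : ∀ i j, a i j = 0 ∨ a i j = 1) (x : N → ℝ) (hx : ∀ j, x j = 0 ∨ x j = 1)
    {j₁ j₂ : N} (hne : j₁ ≠ j₂) (h1 : x j₁ = 1) (h2 : x j₂ = 0) :
    let F := (Sset a j₁ ∩ Sset a j₂).filter (fun i => sLHS a x i = (b i : ℝ))
    penObj ML MG ME a b c wp wm (flipVar (flipVar x j₁) j₂) + penObj ML MG ME a b c wp wm x
        - penObj ML MG ME a b c wp wm (flipVar x j₁) - penObj ML MG ME a b c wp wm (flipVar x j₂)
      = -(∑ i ∈ F ∩ (ML ∪ ME), wp i + ∑ i ∈ F ∩ (MG ∪ ME), wm i) := by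
  intro F
  have isInt : ∀ v : ℝ, v = 0 ∨ v = 1 → ∃ k : ℤ, v = k := by
    rintro v (rfl | rfl)
    exacts [⟨0, by simp⟩, ⟨1, by simp⟩]
  have hgap : ∀ i, ∃ n : ℤ, sLHS a x i - b i = n := fun i => by
    obtain ⟨n, hn⟩ := exists_intCast_sLHS a i (fun j => isInt _ (ha i j)) (fun j => isInt _ (hx j))
    exact ⟨n - b i, by push_cast; rw [hn]⟩
  have hF : ∀ i, (a i j₁ = 1 ∧ a i j₂ = 1 ∧ sLHS a x i = b i) ↔ i ∈ F := fun i => by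
    simp [F, Sset, and_assoc]
  have hexcess := sum_mul_mixed_diff (ML ∪ ME) F wp
    (fun i => max (sLHS a (flipVar (flipVar x j₁) j₂) i - b i) 0)
    (fun i => max (sLHS a x i - b i) 0) (fun i => max (sLHS a (flipVar x j₁) i - b i) 0)
    (fun i => max (sLHS a (flipVar x j₂) i - b i) 0) fun i => by
      have := max_zero_mixed_diff (hgap i) (ha i j₁) (ha i j₂)
      simp only [sub_eq_zero, hF] at this
      rw [sLHS_flipVar_flipVar a hne h1 h2, sLHS_flipVar_of_eq_one a h1,
        sLHS_flipVar_of_eq_zero a h2, ← this]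
      ring_nf
  have hdeficit := sum_mul_mixed_diff (MG ∪ ME) F wm
    (fun i => max (b i - sLHS a (flipVar (flipVar x j₁) j₂) i) 0)
    (fun i => max (b i - sLHS a x i) 0) (fun i => max (b i - sLHS a (flipVar x j₁) i) 0)
    (fun i => max (b i - sLHS a (flipVar x j₂) i) 0) fun i => by
      -- the deficit `b - s` moves like the excess `s - b` with the roles of `j₁`, `j₂` swapped
      obtain ⟨n, hn⟩ := hgap i
      have := max_zero_mixed_diff ⟨-n, by rw [Int.cast_neg, ← hn, neg_sub]⟩ (ha i j₂) (ha i j₁)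
      simp only [sub_eq_zero, @eq_comm _ (b i : ℝ), and_left_comm (a := a i j₂ = 1), hF] at this
      rw [sLHS_flipVar_flipVar a hne h1 h2, sLHS_flipVar_of_eq_one a h1,
        sLHS_flipVar_of_eq_zero a h2, ← this]
      ring_nf
  have hlinear : ∑ j, c j * flipVar (flipVar x j₁) j₂ j + ∑ j, c j * x j
      - ∑ j, c j * flipVar x j₁ j - ∑ j, c j * flipVar x j₂ j = 0 := by
    rw [sum_mul_flipVar, sum_mul_flipVar, sum_mul_flipVar, flipVar_of_ne x hne.symm]
    ring
  simp only [penObj]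
  linarith

theorem stmt_9_general {M N : Type*} [Fintype M] [Fintype N] [DecidableEq N]
    (ML MG ME : Finset M) (a : M → N → ℝ) (b : M → ℕ) (c : N → ℝ)
    (wp wm : M → ℝ)
    (ha : ∀ i j, a i j = 0 ∨ a i j = 1)
    (x : N → ℝ) (hx : ∀ j', x j' = 0 ∨ x j' = 1)
    (hlocal : ∀ j, 0 ≤ penObj ML MG ME a b c wp wm (flipVar x j) - penObj ML MG ME a b c wp wm x)
    (j₁ j₂ : N) (hne : j₁ ≠ j₂) (h1 : x j₁ = 1) (h2 : x j₂ = 0)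
    (himp : penObj ML MG ME a b c wp wm (flipVar (flipVar x j₁) j₂)
        - penObj ML MG ME a b c wp wm x < 0) :
    ((Sset a j₁ ∩ Sset a j₂).filter (fun i => sLHS a x i = (b i : ℝ))).Nonempty ∧
    0 < ∑ i ∈ ((Sset a j₁ ∩ Sset a j₂).filter (fun i => sLHS a x i = (b i : ℝ)))
          ∩ (ML ∪ ME), wp i
        + ∑ i ∈ ((Sset a j₁ ∩ Sset a j₂).filter (fun i => sLHS a x i = (b i : ℝ)))
          ∩ (MG ∪ ME), wm i := by
  have hW := penObj_exchange_eq ML MG ME a b c wp wm ha x hx hne h1 h2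
  dsimp only at hW
  have hlocal₁ := hlocal j₁
  have hlocal₂ := hlocal j₂
  refine ⟨nonempty_iff_ne_empty.2 fun hempty => ?_, by linarith⟩
  simp only [hempty, empty_inter, sum_empty] at hW
  linarith

theorem stmt_9 {M N : Type*} [Fintype M] [Fintype N] [DecidableEq N]
    (ML MG ME : Finset M) (a : M → N → ℝ) (b : M → ℕ) (c : N → ℝ)
    (wp wm : M → ℝ)
    (ha : ∀ i j, a i j = 0 ∨ a i j = 1)
    (hwp : ∀ i, 0 ≤ wp i) (hwm : ∀ i, 0 ≤ wm i)
    (x : N → ℝ) (hx : ∀ j', x j' = 0 ∨ x j' = 1)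
    (hlocal : ∀ j, 0 ≤ penObj ML MG ME a b c wp wm (flipVar x j) - penObj ML MG ME a b c wp wm x)
    (j₁ j₂ : N) (hne : j₁ ≠ j₂) (h1 : x j₁ = 1) (h2 : x j₂ = 0)
    (himp : penObj ML MG ME a b c wp wm (flipVar (flipVar x j₁) j₂)
        - penObj ML MG ME a b c wp wm x < 0) :
    ((Sset a j₁ ∩ Sset a j₂).filter (fun i => sLHS a x i = (b i : ℝ))).Nonempty ∧
    0 < ∑ i ∈ ((Sset a j₁ ∩ Sset a j₂).filter (fun i => sLHS a x i = (b i : ℝ)))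
          ∩ (ML ∪ ME), wp i
        + ∑ i ∈ ((Sset a j₁ ∩ Sset a j₂).filter (fun i => sLHS a x i = (b i : ℝ)))
          ∩ (MG ∪ ME), wm i :=
  stmt_9_general ML MG ME a b c wp wm ha x hx hlocal j₁ j₂ hne h1 h2 himp
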